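/- arXiv:hep-lat/0006027 — 2 statements merged into one kernel-verified Lean document; each statement's English description precedes it below -/
import Mathlib

section
/- Let P(x,y), Q(x,y) ∈ ℂ[x,y] with Q(0,0)=0 and suppose P/Q is analytic near the origin. Then every irreducible factor of Q that vanishes at the origin is also a factor of P. -/
open MvPolynomial Polynomial
set_option maxHeartbeats 1000000
set_option synthInstance.maxHeartbeats 400000

section helpers
open Polynomial Multiset

noncomputable def Complex.abs : AbsoluteValue ℂ ℝ where
  toFun z := ‖z‖
  map_mul' := norm_mul
  nonneg' := norm_nonneg
  eq_zero' _ := norm_eq_zero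
  add_le' := norm_add_le

lemma Complex.abs_apply (z : ℂ) : Complex.abs z = ‖z‖ := rfl

lemma Complex.continuous_abs : Continuous Complex.abs := continuous_norm

lemma Complex.abs_ofReal (r : ℝ) : Complex.abs r = |r| := by
  rw [Complex.abs_apply, Complex.norm_real, Real.norm_eq_abs]

lemma abs_multiset_sum_le (s : Multiset ℂ) : Complex.abs s.sum ≤ (s.map Complex.abs).sum := by
  induction s using Multiset.induction_on with
  | empty => simp
  | cons a s ih =>
    simp only [Multiset.sum_cons, Multiset.map_cons]
    exact (Complex.abs.add_le _ _).trans (by linarith)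

lemma pow_card_le_prod'' (s : Multiset ℝ) (ε : ℝ) (hε : 0 ≤ ε) (h : ∀ x ∈ s, ε ≤ x) :
    ε ^ Multiset.card s ≤ s.prod := by
  induction s using Multiset.induction_on with
  | empty => simp
  | cons a s ih =>
    simp only [Multiset.prod_cons, Multiset.card_cons, pow_succ]
    have ha : ε ≤ a := h a (Multiset.mem_cons_self a s)
    have hs : ε ^ Multiset.card s ≤ s.prod := ih (fun x hx => h x (Multiset.mem_cons_of_mem hx))
    calc ε ^ Multiset.card s * ε ≤ s.prod * a := by
          apply mul_le_mul hs ha hε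
          exact le_trans (pow_nonneg hε _) hs
      _ = a * s.prod := mul_comm _ _

lemma multiset_prod_nonneg (s : Multiset ℝ) (h : ∀ x ∈ s, 0 ≤ x) : 0 ≤ s.prod := by
  induction s using Multiset.induction_on with
  | empty => simp
  | cons a s ih =>
    simp only [Multiset.prod_cons]
    exact mul_nonneg (h a (Multiset.mem_cons_self a s))
      (ih fun x hx => h x (Multiset.mem_cons_of_mem hx))

lemma exists_small_root (f : Polynomial ℂ) (j : ℕ) (hj : 1 ≤ j) (ε : ℝ) (hε : 0 < ε)
    (hlt : 2 ^ f.natDegree * Complex.abs (f.eval 0) < Complex.abs (f.coeff j) * ε ^ j) :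
    ∃ y : ℂ, Complex.abs y < ε ∧ f.eval y = 0 := by
  by_contra hcon
  push_neg at hcon
  have hcj : f.coeff j ≠ 0 := by
    intro h0
    rw [h0] at hlt
    simp at hlt
    have := mul_nonneg (by positivity : (0:ℝ) ≤ 2 ^ f.natDegree)
      (AbsoluteValue.nonneg Complex.abs (f.eval 0))
    linarith
  have hf : f ≠ 0 := fun h0 => hcj (by simp [h0])
  set n := f.natDegree with hn
  have hjn : j ≤ n := le_natDegree_of_ne_zero hcj
  have hcard : Multiset.card f.roots = n :=
    (splits_iff_card_roots.mp (IsAlgClosed.splits f))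
  have hroots_ge : ∀ r ∈ f.roots, ε ≤ Complex.abs r := by
    intro r hr
    by_contra hlt'
    push_neg at hlt'
    exact hcon r hlt' ((mem_roots hf).mp hr)
  set s : Multiset ℝ := f.roots.map Complex.abs with hs
  have hcards : Multiset.card s = n := by rw [hs, Multiset.card_map, hcard]
  have hs_nonneg : ∀ x ∈ s, 0 ≤ x := by
    intro x hx
    obtain ⟨r, _, rfl⟩ := Multiset.mem_map.mp hx
    exact AbsoluteValue.nonneg _ _
  have hs_ge : ∀ x ∈ s, ε ≤ x := by
    intro x hx
    obtain ⟨r, hr, rfl⟩ := Multiset.mem_map.mp hx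
    exact hroots_ge r hr
  have hsprod : 0 ≤ s.prod := multiset_prod_nonneg s hs_nonneg
  -- eval 0 in terms of roots
  have heval0 : Complex.abs (f.eval 0) = Complex.abs f.leadingCoeff * s.prod := by
    conv_lhs => rw [(IsAlgClosed.splits f).eq_prod_roots]
    rw [Polynomial.eval_mul, Polynomial.eval_C, map_mul, Polynomial.eval_multiset_prod]
    congr 1
    rw [Multiset.map_map, map_multiset_prod, Multiset.map_map, hs]
    apply congrArg
    apply Multiset.map_congr rfl
    intro r _
    simp
  -- coeff j in terms of esymm
  have hcoeff : Complex.abs (f.coeff j)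
      = Complex.abs f.leadingCoeff * Complex.abs (f.roots.esymm (n - j)) := by
    rw [Polynomial.coeff_eq_esymm_roots_of_card hcard hjn, map_mul, map_mul, map_pow]
    simp [abs_neg]
    exact Or.inl rfl
  -- bound esymm
  have hterm : ∀ t ∈ s.powersetCard (n - j), t.prod * ε ^ j ≤ s.prod := by
    intro t ht
    obtain ⟨hts, htc⟩ := (Multiset.mem_powersetCard).mp ht
    obtain ⟨u, hu⟩ := Multiset.le_iff_exists_add.mp hts
    have hcardu : Multiset.card u = j := by
      have h2 := hcards
      rw [hu, Multiset.card_add, htc] at h2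
      omega
    have hu_ge : ∀ x ∈ u, ε ≤ x := fun x hx =>
      hs_ge x (by rw [hu]; exact Multiset.mem_add.mpr (Or.inr hx))
    have ht_nonneg : 0 ≤ t.prod := multiset_prod_nonneg t
      (fun x hx => hs_nonneg x (by rw [hu]; exact Multiset.mem_add.mpr (Or.inl hx)))
    rw [hu, Multiset.prod_add]
    have : ε ^ j ≤ u.prod := by
      have := pow_card_le_prod'' u ε (le_of_lt hε) hu_ge
      rwa [hcardu] at this
    exact mul_le_mul_of_nonneg_left this ht_nonneg
  have hchoose : (Multiset.card (s.powersetCard (n - j)) : ℝ) ≤ 2 ^ n := by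
    rw [Multiset.card_powersetCard, hcards]
    have h1 : n.choose (n - j) ≤ 2 ^ n := by
      calc n.choose (n - j) ≤ ∑ i ∈ Finset.range (n + 1), n.choose i :=
            Finset.single_le_sum (f := fun i => n.choose i) (fun _ _ => Nat.zero_le _)
              (Finset.mem_range.mpr (by omega))
        _ = 2 ^ n := Nat.sum_range_choose n
    exact_mod_cast h1
  have hesymm : Complex.abs (f.roots.esymm (n - j)) * ε ^ j ≤ 2 ^ n * s.prod := by
    rw [Multiset.esymm]
    calc Complex.abs ((f.roots.powersetCard (n - j)).map Multiset.prod).sum * ε ^ j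
        ≤ (((f.roots.powersetCard (n - j)).map Multiset.prod).map Complex.abs).sum * ε ^ j := by
          apply mul_le_mul_of_nonneg_right (abs_multiset_sum_le _) (by positivity)
      _ = ((s.powersetCard (n - j)).map Multiset.prod).sum * ε ^ j := by
          rw [hs, Multiset.powersetCard_map, Multiset.map_map, Multiset.map_map]
          apply congrArg (· * ε ^ j)
          apply congrArg
          apply Multiset.map_congr rfl
          intro t _
          simp [map_multiset_prod]
      _ ≤ (Multiset.card (s.powersetCard (n - j)) : ℝ) * s.prod := by
          rw [← Multiset.sum_map_mul_right]
          have h3 := Multiset.sum_le_card_nsmul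
            ((s.powersetCard (n - j)).map (fun t => t.prod * ε ^ j)) s.prod ?_
          · rw [Multiset.card_map] at h3
            simpa [nsmul_eq_mul] using h3
          · intro x hx
            obtain ⟨t, ht, rfl⟩ := Multiset.mem_map.mp hx
            exact hterm t ht
      _ ≤ 2 ^ n * s.prod := mul_le_mul_of_nonneg_right hchoose hsprod
  have h1 : Complex.abs (f.coeff j) * ε ^ j ≤ 2 ^ n * Complex.abs (f.eval 0) := by
    rw [hcoeff, heval0, mul_assoc,
      show (2:ℝ) ^ n * (Complex.abs f.leadingCoeff * s.prod)
        = Complex.abs f.leadingCoeff * (2 ^ n * s.prod) by ring]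
    exact mul_le_mul_of_nonneg_left hesymm (AbsoluteValue.nonneg _ _)
  linarith
open MvPolynomial Polynomial
noncomputable def e2 : MvPolynomial (Fin 2) ℂ ≃ₐ[ℂ] Polynomial (Polynomial ℂ) :=
  (MvPolynomial.finSuccEquiv ℂ 1).trans
    (Polynomial.mapAlgEquiv ((MvPolynomial.finSuccEquiv ℂ 0).trans
      (Polynomial.mapAlgEquiv (MvPolynomial.isEmptyAlgEquiv ℂ (Fin 0)))))

lemma e2_X0 : e2 (X 0) = Polynomial.X := by
  simp [e2, finSuccEquiv_X_zero, Polynomial.coe_mapAlgEquiv, Polynomial.map_X]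

lemma e2_X1 : e2 (X 1) = Polynomial.C Polynomial.X := by
  have h : (X 1 : MvPolynomial (Fin 2) ℂ) = X (Fin.succ 0) := rfl
  simp [e2, h, finSuccEquiv_X_succ, Polynomial.coe_mapAlgEquiv, Polynomial.map_C,
    finSuccEquiv_X_zero, Polynomial.map_X]

lemma e2_C (a : ℂ) : e2 (MvPolynomial.C a) = Polynomial.C (Polynomial.C a) := by
  have h1 : (MvPolynomial.C a : MvPolynomial (Fin 2) ℂ) = algebraMap ℂ _ a := rfl
  rw [h1, AlgEquiv.commutes]
  simp [Polynomial.algebraMap_apply]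

lemma eval_e2 (p : MvPolynomial (Fin 2) ℂ) (z1 z2 : ℂ) :
    ((e2 p).map (Polynomial.evalRingHom z2)).eval z1 = eval ![z1, z2] p := by
  induction p using MvPolynomial.induction_on with
  | C a => simp [e2_C]
  | add p q hp hq => simp [map_add, Polynomial.map_add, hp, hq]
  | mul_X p i hp =>
    have h2 : ∀ i : Fin 2, ((e2 (X i)).map (Polynomial.evalRingHom z2)).eval z1
        = eval ![z1, z2] (X i) := by
      intro i
      fin_cases i <;> simp [e2_X0, e2_X1]
    simp only [map_mul, Polynomial.map_mul, Polynomial.eval_mul, hp, h2, MvPolynomial.eval_mul]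

lemma infinite_small_ball (δ : ℝ) (hδ : 0 < δ) : {x : ℂ | Complex.abs x < δ}.Infinite := by
  refine Set.infinite_of_injective_forall_mem (f := fun n : ℕ => ((δ / (n + 2) : ℝ) : ℂ)) ?_ ?_
  · intro m n hmn
    have hmn' : ((δ / (m + 2) : ℝ) : ℂ) = ((δ / (n + 2) : ℝ) : ℂ) := hmn
    have h1 : (δ / ((m:ℝ) + 2)) = δ / ((n:ℝ) + 2) := by exact_mod_cast hmn'
    rw [div_eq_div_iff (by positivity) (by positivity)] at h1
    have h3 := mul_left_cancel₀ (ne_of_gt hδ) (by linarith : δ * ((n:ℝ) + 2) = δ * ((m:ℝ) + 2))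
    have h4 : (m:ℝ) = (n:ℝ) := by linarith
    exact_mod_cast h4
  · intro n
    simp only [Set.mem_setOf_eq, Complex.abs_ofReal]
    rw [abs_of_pos (by positivity)]
    rw [div_lt_iff₀ (by positivity)]
    nlinarith [Nat.cast_nonneg (α := ℝ) n]

end helpers

/-- If `P/Q` is analytic near the origin (`Q(0,0) = 0`), then every irreducible
factor of `Q` vanishing at the origin also divides `P`. -/
theorem stmt1 (P Q : MvPolynomial (Fin 2) ℂ)
    (hQ0 : eval ![0, 0] Q = 0)
    (hanal : ∃ U : Set (ℂ × ℂ), IsOpen U ∧ (0, 0) ∈ U ∧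
      ∃ h : ℂ × ℂ → ℂ, AnalyticOnNhd ℂ h U ∧
        ∀ z ∈ U, eval ![z.1, z.2] P = h z * eval ![z.1, z.2] Q)
    (F : MvPolynomial (Fin 2) ℂ) (hFirr : Irreducible F) (hFQ : F ∣ Q)
    (hF0 : eval ![0, 0] F = 0) :
    F ∣ P := by
  classical
  by_cases hP0 : P = 0
  · simp [hP0]
  obtain ⟨U, hUopen, hU0, h, hhanal, hPQ⟩ := hanal
  obtain ⟨G, hG⟩ := hFQ
  set F' := e2 F with hF'def
  set P' := e2 P with hP'def
  have hirr' : Irreducible F' := hFirr.map e2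
  have hdvd_iff : F ∣ P ↔ F' ∣ P' := by
    constructor
    · intro hd; obtain ⟨c, hc⟩ := hd; exact ⟨e2 c, by rw [hP'def, hF'def, hc, map_mul]⟩
    · intro hd
      have h2 := map_dvd e2.symm hd
      simpa [hF'def, hP'def] using h2
  -- P vanishes where F vanishes, inside U
  have hPzero : ∀ z : ℂ × ℂ, z ∈ U → eval ![z.1, z.2] F = 0 → eval ![z.1, z.2] P = 0 := by
    intro z hz hFz
    rw [hPQ z hz, hG, map_mul, hFz, zero_mul, mul_zero]
  obtain ⟨r, hr0, hrU⟩ := Metric.isOpen_iff.mp hUopen (0,0) hU0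
  have hmem_ball : ∀ y0 x0 : ℂ, Complex.abs y0 < r → Complex.abs x0 < r →
      ((y0, x0) : ℂ × ℂ) ∈ U := by
    intro y0 x0 h1 h2
    apply hrU
    rw [Metric.mem_ball, Prod.dist_eq]
    simp only [Complex.dist_eq, sub_zero]
    exact max_lt h1 h2
  -- coeff 0 of F' vanishes at 0
  have hF00 : (F'.coeff 0).eval 0 = 0 := by
    have h1 := eval_e2 F 0 0
    rw [hF0, ← Polynomial.coeff_zero_eq_eval_zero, Polynomial.coeff_map] at h1
    simpa using h1
  by_cases hcase : ∃ j, 1 ≤ j ∧ (F'.coeff j).eval 0 ≠ 0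
  · -- main case
    obtain ⟨j, hj1, hj0⟩ := hcase
    have hcj : F'.coeff j ≠ 0 := fun h0 => hj0 (by rw [h0]; simp)
    have hdF : 1 ≤ F'.natDegree := le_trans hj1 (le_natDegree_of_ne_zero hcj)
    have hF'0 : F' ≠ 0 := fun h0 => by simp [h0] at hcj
    have prim : F'.IsPrimitive := by
      intro c hc
      obtain ⟨w, hw⟩ := hc
      rcases hirr'.isUnit_or_isUnit hw with hu | hu
      · exact Polynomial.isUnit_C.mp hu
      · exfalso
        have hc0 : c ≠ 0 := by rintro rfl; simp at hw; exact hF'0 hw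
        have hw0 : Polynomial.natDegree w = 0 := natDegree_eq_zero_of_isUnit hu
        have : F'.natDegree = 0 := by
          rw [hw, Polynomial.natDegree_C_mul hc0, hw0]
        omega
    rw [hdvd_iff]
    by_contra hndvd
    have hirrK : Irreducible (F'.map (algebraMap (Polynomial ℂ) (FractionRing (Polynomial ℂ)))) :=
      (prim.irreducible_iff_irreducible_map_fraction_map).mp hirr'
    have hP'0 : P' ≠ 0 := by
      intro h0
      apply hP0
      rw [hP'def] at h0
      simpa using congrArg e2.symm h0
    have hndK : ¬ (F'.map (algebraMap (Polynomial ℂ) (FractionRing (Polynomial ℂ))) ∣ P'.map (algebraMap (Polynomial ℂ) (FractionRing (Polynomial ℂ)))) := by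
      intro hdd
      apply hndvd
      have hcont0 : P'.content ≠ 0 := fun h0 => hP'0 (content_eq_zero_iff.mp h0)
      have hunit : IsUnit (Polynomial.C (algebraMap (Polynomial ℂ) (FractionRing (Polynomial ℂ)) P'.content)) := by
        rw [Polynomial.isUnit_C]
        rw [isUnit_iff_ne_zero]
        exact fun h0 => hcont0 ((injective_iff_map_eq_zero _).mp (IsFractionRing.injective (Polynomial ℂ) (FractionRing (Polynomial ℂ))) _ h0)
      have hdd2 : F'.map (algebraMap (Polynomial ℂ) (FractionRing (Polynomial ℂ))) ∣ P'.primPart.map (algebraMap (Polynomial ℂ) (FractionRing (Polynomial ℂ))) := by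
        have hPP := P'.eq_C_content_mul_primPart
        rw [hPP, Polynomial.map_mul, Polynomial.map_C] at hdd
        exact (IsUnit.dvd_mul_left hunit).mp hdd
      have := prim.dvd_of_fraction_map_dvd_fraction_map hdd2
      exact this.trans P'.primPart_dvd
    haveI : IsPrincipalIdealRing (Polynomial (FractionRing (Polynomial ℂ))) :=
      EuclideanDomain.to_principal_ideal_domain (R := Polynomial (FractionRing (Polynomial ℂ)))
    have hcop : IsCoprime (F'.map (algebraMap (Polynomial ℂ) (FractionRing (Polynomial ℂ)))) (P'.map (algebraMap (Polynomial ℂ) (FractionRing (Polynomial ℂ)))) :=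
      hirrK.coprime_iff_not_dvd.mpr hndK
    obtain ⟨a, b, hab⟩ := hcop
    obtain ⟨⟨ca, hca0⟩, hca⟩ := IsLocalization.integerNormalization_map_to_map
      (nonZeroDivisors (Polynomial ℂ)) a
    obtain ⟨⟨cb, hcb0⟩, hcb⟩ := IsLocalization.integerNormalization_map_to_map
      (nonZeroDivisors (Polynomial ℂ)) b
    set A := IsLocalization.integerNormalization (nonZeroDivisors (Polynomial ℂ)) a * Polynomial.C cb with hA
    set B := IsLocalization.integerNormalization (nonZeroDivisors (Polynomial ℂ)) b * Polynomial.C ca with hB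
    have hkey : A * F' + B * P' = Polynomial.C (ca * cb) := by
      apply Polynomial.map_injective (algebraMap (Polynomial ℂ) (FractionRing (Polynomial ℂ))) (IsFractionRing.injective (Polynomial ℂ) (FractionRing (Polynomial ℂ)))
      rw [Polynomial.map_add, Polynomial.map_mul, Polynomial.map_mul, Polynomial.map_mul,
        Polynomial.map_mul, hca, hcb, Polynomial.map_C, Polynomial.map_C, Polynomial.map_C,
        Algebra.smul_def, Algebra.smul_def, map_mul]
      simp only [Polynomial.algebraMap_apply, Polynomial.C_mul]
      linear_combination (Polynomial.C ((algebraMap (Polynomial ℂ) (FractionRing (Polynomial ℂ))) ca)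
        * Polynomial.C ((algebraMap (Polynomial ℂ) (FractionRing (Polynomial ℂ))) cb)) * hab
    have hc_ne : ca * cb ≠ 0 :=
      mul_ne_zero (nonZeroDivisors.ne_zero hca0) (nonZeroDivisors.ne_zero hcb0)
    -- analysis: find roots
    set β := Complex.abs ((F'.coeff j).eval 0) with hβdef
    have hβ : 0 < β := by
      rw [hβdef]
      exact AbsoluteValue.pos _ hj0
    set d := F'.natDegree with hd
    set ε := r / 2 with hε'
    have hε : 0 < ε := by positivity
    set S := {x : ℂ | β / 2 < Complex.abs ((F'.coeff j).eval x)} ∩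
      {x : ℂ | 2 ^ d * Complex.abs ((F'.coeff 0).eval x) < β / 2 * ε ^ j} with hSdef
    have hSopen : IsOpen S := by
      apply IsOpen.inter
      · exact isOpen_lt continuous_const (Complex.continuous_abs.comp (F'.coeff j).continuous)
      · exact isOpen_lt (Continuous.mul continuous_const
          (Complex.continuous_abs.comp (F'.coeff 0).continuous)) continuous_const
    have hS0 : (0 : ℂ) ∈ S := by
      constructor
      · simp only [Set.mem_setOf_eq]
        linarith
      · simp only [Set.mem_setOf_eq, hF00]
        simp
        positivity
    obtain ⟨δ, hδ0, hδS⟩ := Metric.isOpen_iff.mp hSopen 0 hS0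
    set δ' := min δ ε with hδ'def
    have hδ'0 : 0 < δ' := lt_min hδ0 hε
    have hroot : ∀ x0 : ℂ, Complex.abs x0 < δ' → (ca * cb).eval x0 = 0 := by
      intro x0 hx0
      have hx0S : x0 ∈ S := by
        apply hδS
        rw [Metric.mem_ball, Complex.dist_eq, sub_zero]
        exact lt_of_lt_of_le hx0 (min_le_left _ _)
      obtain ⟨hx1, hx2⟩ := hx0S
      simp only [Set.mem_setOf_eq] at hx1 hx2
      set f := F'.map (Polynomial.evalRingHom x0) with hfdef
      have hfc : ∀ k, f.coeff k = (F'.coeff k).eval x0 := by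
        intro k; rw [hfdef, Polynomial.coeff_map]; rfl
      have hfe0 : f.eval 0 = (F'.coeff 0).eval x0 := by
        rw [← Polynomial.coeff_zero_eq_eval_zero, hfc]
      have hnd : f.natDegree ≤ d := Polynomial.natDegree_map_le
      have hineq : 2 ^ f.natDegree * Complex.abs (f.eval 0) < Complex.abs (f.coeff j) * ε ^ j := by
        calc 2 ^ f.natDegree * Complex.abs (f.eval 0)
            ≤ 2 ^ d * Complex.abs (f.eval 0) := by
              apply mul_le_mul_of_nonneg_right _ (AbsoluteValue.nonneg _ _)
              exact pow_le_pow_right₀ one_le_two hnd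
          _ < β / 2 * ε ^ j := by rw [hfe0]; exact hx2
          _ ≤ Complex.abs (f.coeff j) * ε ^ j := by
              apply mul_le_mul_of_nonneg_right _ (by positivity)
              rw [hfc]
              exact le_of_lt hx1
      obtain ⟨y0, hy0ε, hy0root⟩ := exists_small_root f j hj1 ε hε hineq
      have hFz : eval ![y0, x0] F = 0 := by
        rw [← eval_e2]
        exact hy0root
      have hzU : ((y0, x0) : ℂ × ℂ) ∈ U := by
        apply hmem_ball
        · exact lt_of_lt_of_le hy0ε (by rw [hε']; linarith)
        · calc Complex.abs x0 < δ' := hx0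
            _ ≤ ε := min_le_right _ _
            _ < r := by rw [hε']; linarith
      have hPz : eval ![y0, x0] P = 0 := hPzero (y0, x0) hzU hFz
      -- evaluate hkey
      have hev := congrArg (fun p : Polynomial (Polynomial ℂ) =>
        ((p.map (Polynomial.evalRingHom x0)).eval y0)) hkey
      simp only [Polynomial.map_add, Polynomial.map_mul, Polynomial.eval_add,
        Polynomial.eval_mul, Polynomial.map_C, Polynomial.eval_C] at hev
      rw [show Polynomial.eval y0 (Polynomial.map (Polynomial.evalRingHom x0) F')
            = eval ![y0, x0] F from eval_e2 F y0 x0,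
          show Polynomial.eval y0 (Polynomial.map (Polynomial.evalRingHom x0) P')
            = eval ![y0, x0] P from eval_e2 P y0 x0, hFz, hPz] at hev
      simpa using hev.symm
    have hinf : ({x : ℂ | Complex.abs x < δ'}).Infinite := infinite_small_ball δ' hδ'0
    have : (ca * cb : Polynomial ℂ) = 0 := by
      apply Polynomial.eq_zero_of_infinite_isRoot
      apply hinf.mono
      intro x hx
      exact hroot x hx
    exact hc_ne this
  · -- degenerate case : F is associated to X 1
    push_neg at hcase
    have hallc : ∀ k, (F'.coeff k).eval 0 = 0 := by
      intro k
      rcases Nat.eq_zero_or_pos k with rfl | hk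
      · exact hF00
      · exact hcase k hk
    have hCX : Polynomial.C (Polynomial.X : Polynomial ℂ) ∣ F' := by
      rw [Polynomial.C_dvd_iff_dvd_coeff]
      intro k
      rw [Polynomial.X_dvd_iff, Polynomial.coeff_zero_eq_eval_zero]
      exact hallc k
    obtain ⟨W, hW⟩ := hCX
    have hCXnu : ¬ IsUnit (Polynomial.C (Polynomial.X : Polynomial ℂ)) := by
      rw [Polynomial.isUnit_C]
      exact Polynomial.not_isUnit_X
    have hWu : IsUnit W := (hirr'.isUnit_or_isUnit hW).resolve_left hCXnu
    -- show C X divides P'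
    have hP'0map : P'.map (Polynomial.evalRingHom (0:ℂ)) = 0 := by
      apply Polynomial.eq_zero_of_infinite_isRoot
      apply (infinite_small_ball r hr0).mono
      intro y hy
      simp only [Set.mem_setOf_eq] at hy ⊢
      show Polynomial.eval y (P'.map (Polynomial.evalRingHom (0:ℂ))) = 0
      rw [show Polynomial.eval y (Polynomial.map (Polynomial.evalRingHom (0:ℂ)) P')
            = eval ![y, 0] P from eval_e2 P y 0]
      apply hPzero (y, 0) (hmem_ball y 0 hy (by simpa using hr0))
      rw [← eval_e2 F y 0, ← hF'def, hW]
      simp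
    have hCXP : Polynomial.C (Polynomial.X : Polynomial ℂ) ∣ P' := by
      rw [Polynomial.C_dvd_iff_dvd_coeff]
      intro k
      rw [Polynomial.X_dvd_iff, Polynomial.coeff_zero_eq_eval_zero]
      have := congrArg (fun p => Polynomial.coeff p k) hP'0map
      simpa [Polynomial.coeff_map] using this
    rw [hdvd_iff, hW]
    exact (IsUnit.mul_right_dvd hWu).mpr hCXP
end

section
/- Let G₁(x,y), G₂(x,y) ∈ ℂ[x,y] with G₁(0,0) ≠ 0 and G₂(0,0) ≠ 0, and define B(x,y) = x(1−x)·G₁(x,y)² + y(1−y)·G₂(x,y)². Suppose B = F·P is a polynomial factorization with F(0,0) = 0 and P(0,0) ≠ 0. Then F vanishes at some point of the set Z₀ = {(x,y) : x,y ∈ {0,1}} other than (0,0). -/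
noncomputable section StmtAux
open Polynomial

abbrev Apoly := Polynomial ℂ
abbrev Spoly := Polynomial Apoly

/-- the transfer hom from 2-variable polynomials to (ℂ[x])[y] -/
def Φ : MvPolynomial (Fin 2) ℂ →+* Spoly :=
  MvPolynomial.eval₂Hom ((C : Apoly →+* Spoly).comp (C : ℂ →+* Apoly))
    ![Polynomial.C Polynomial.X, Polynomial.X]

/-- evaluation at (a,b) of elements of (ℂ[x])[y] -/
def ε (a b : ℂ) : Spoly →+* ℂ := eval₂RingHom (evalRingHom a) b

lemma eval_eq_ε (a b : ℂ) (Q : MvPolynomial (Fin 2) ℂ) :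
    MvPolynomial.eval ![a, b] Q = ε a b (Φ Q) := by
  have : (MvPolynomial.eval ![a, b] : MvPolynomial (Fin 2) ℂ →+* ℂ)
      = (ε a b).comp Φ := by
    apply MvPolynomial.ringHom_ext
    · intro r
      simp [Φ, ε]
    · intro i
      fin_cases i <;> simp [Φ, ε]
  exact congrFun (congrArg DFunLike.coe this) Q

lemma rm_pow' {R : Type*} [CommRing R] [IsDomain R] {p : Polynomial R} (hp : p ≠ 0) (c : R)
    (n : ℕ) : rootMultiplicity c (p ^ n) = n * rootMultiplicity c p := by
  induction n with
  | zero => simp only [pow_zero, zero_mul]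
            exact rootMultiplicity_eq_zero (by simp [IsRoot])
  | succ n ih =>
      rw [pow_succ, rootMultiplicity_mul (mul_ne_zero (pow_ne_zero _ hp) hp), ih]
      ring

lemma ε_eval (a b : ℂ) (p : Spoly) : ε a b p = (p.eval (C b)).eval a := by
  have h : ε a b p = eval₂ (evalRingHom a) b p := rfl
  have h2 : (evalRingHom a) ((C b : Apoly)) = b := by simp
  have h3 := eval₂_at_apply (p := p) (evalRingHom a) (C b : Apoly)
  rw [h2] at h3
  rw [h, h3]
  rfl

variable {K : Type*} [Field K]

lemma norm_root_eq (f : K[X]) (hm : f.Monic) [Fact (Irreducible f)] :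
    Algebra.norm K (AdjoinRoot.root f) = (-1) ^ f.natDegree * f.eval 0 := by
  have h := Algebra.PowerBasis.norm_gen_eq_coeff_zero_minpoly (AdjoinRoot.powerBasis hm.ne_zero)
  rw [AdjoinRoot.powerBasis_gen, AdjoinRoot.minpoly_root hm.ne_zero, hm.leadingCoeff, inv_one,
    map_one, mul_one] at h
  rw [h, AdjoinRoot.powerBasis_dim, coeff_zero_eq_eval_zero]

lemma norm_one_sub_root_eq (f : K[X]) (hm : f.Monic) [Fact (Irreducible f)] :
    Algebra.norm K (1 - AdjoinRoot.root f) = f.eval 1 := by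
  set L := AdjoinRoot f
  set θ : L := AdjoinRoot.root f with hθ
  have hf0 : f ≠ 0 := hm.ne_zero
  haveI : FiniteDimensional K L := (AdjoinRoot.powerBasis hf0).finite
  set n := f.natDegree with hn
  set α : L := θ - 1 with hα
  set g : K[X] := f.comp (X + C 1) with hg
  have hgm : g.Monic := hm.comp_X_add_C 1
  have hgdeg : g.natDegree = n := by
    rw [hg, natDegree_comp, natDegree_X_add_C, mul_one]
  have haevalg : (aeval α) g = 0 := by
    rw [hg, aeval_comp]
    simp only [map_add, aeval_X, aeval_C, map_one]
    rw [hα, sub_add_cancel, hθ, AdjoinRoot.aeval_eq, AdjoinRoot.mk_self]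
  have hint : IsIntegral K α := IsIntegral.of_finite K α
  have hmem : (AdjoinRoot.powerBasis hf0).gen ∈ Algebra.adjoin K ({α} : Set L) := by
    have h1 : α ∈ Algebra.adjoin K ({α} : Set L) := Algebra.self_mem_adjoin_singleton K α
    have h2 : (AdjoinRoot.powerBasis hf0).gen = α + 1 := by
      rw [AdjoinRoot.powerBasis_gen, hα]; ring
    rw [h2]
    exact Subalgebra.add_mem _ h1 (Subalgebra.one_mem _)
  set pb2 := PowerBasis.ofAdjoinEqTop hint (PowerBasis.adjoin_eq_top_of_gen_mem_adjoin hmem) with hpb2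
  have hdim2 : pb2.dim = (minpoly K α).natDegree := by
    simp [hpb2]
  have hgen2 : pb2.gen = α := by
    simp [hpb2]
  have hfr : Module.finrank K L = n := by
    rw [(AdjoinRoot.powerBasis hf0).finrank, AdjoinRoot.powerBasis_dim]
  have hdeg_min : (minpoly K α).natDegree = n := by
    rw [← hdim2, ← pb2.finrank, hfr]
  have hdvd : minpoly K α ∣ g := minpoly.dvd K α haevalg
  have hminmonic : (minpoly K α).Monic := minpoly.monic hint
  have hmin_eq : minpoly K α = g := by
    obtain ⟨c, hc⟩ := hdvd
    have hc0 : c ≠ 0 := by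
      intro h; rw [h, mul_zero] at hc; exact hgm.ne_zero hc
    have hdegc : c.natDegree = 0 := by
      have := natDegree_mul (hminmonic.ne_zero) hc0
      rw [← hc, hgdeg, hdeg_min] at this
      omega
    have hcm : c.Monic := by
      have h2 := hgm.leadingCoeff
      rw [hc, leadingCoeff_mul, hminmonic.leadingCoeff, one_mul] at h2
      exact h2
    rw [hc, Polynomial.Monic.natDegree_eq_zero hcm |>.mp hdegc, mul_one]
  have hnormα : Algebra.norm K α = (-1) ^ n * f.eval 1 := by
    have h := Algebra.PowerBasis.norm_gen_eq_coeff_zero_minpoly pb2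
    rw [hgen2] at h
    rw [h, hdim2, hdeg_min, hmin_eq, hg, coeff_zero_eq_eval_zero, eval_comp]
    simp
  have h1s : (1 : L) - θ = -1 * α := by rw [hα]; ring
  rw [h1s, map_mul, hnormα]
  have hneg1 : Algebra.norm K (-1 : L) = (-1 : K) ^ n := by
    have h2 : (-1 : L) = algebraMap K L (-1) := by simp
    rw [h2, Algebra.norm_algebraMap, hfr]
  rw [hneg1, ← mul_assoc, ← pow_add]
  have : ((-1 : K)) ^ (n + n) = 1 := by
    rw [← two_mul, pow_mul]; simp
  rw [this, one_mul]

abbrev KK := RatFunc ℂ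
abbrev φK : Apoly →+* KK := algebraMap Apoly KK

set_option maxHeartbeats 2000000 in
set_option synthInstance.maxHeartbeats 400000 in
/-- the key contradiction lemma in `(ℂ[x])[y]` -/
lemma main_aux (Ft Pt G1t G2t : Spoly)
    (hfactS : Ft * Pt = C (X * (1 - X)) * G1t ^ 2 + X * (1 - X) * G2t ^ 2)
    (hG1 : ε 0 0 G1t ≠ 0) (hG2 : ε 0 0 G2t ≠ 0) (hF00 : ε 0 0 Ft = 0) (hP00 : ε 0 0 Pt ≠ 0)
    (h10 : ε 1 0 Ft ≠ 0) (h01 : ε 0 1 Ft ≠ 0) (h11 : ε 1 1 Ft ≠ 0) : False := by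
  classical
  set u : Apoly := X * (1 - X) with hu
  -- basic facts about u
  have hXne : (X : Apoly) ≠ 0 := X_ne_zero
  have h1Xne : (1 - X : Apoly) ≠ 0 := by
    intro h
    have := congrArg (Polynomial.eval (0 : ℂ)) h
    simp at this
  have hu0 : u ≠ 0 := mul_ne_zero hXne h1Xne
  have hrm0X : rootMultiplicity (0 : ℂ) (X : Apoly) = 1 := by
    have : (X : Apoly) = X - C 0 := by simp
    rw [this, rootMultiplicity_X_sub_C_self]
  have hrm01X : rootMultiplicity (0 : ℂ) (1 - X : Apoly) = 0 :=
    rootMultiplicity_eq_zero (by simp [IsRoot])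
  have hrm0u : rootMultiplicity (0 : ℂ) u = 1 := by
    rw [hu, rootMultiplicity_mul (mul_ne_zero hXne h1Xne), hrm0X, hrm01X]
  have hrm1X : rootMultiplicity (1 : ℂ) (X : Apoly) = 0 :=
    rootMultiplicity_eq_zero (by simp [IsRoot])
  have hrm11X : rootMultiplicity (1 : ℂ) (1 - X : Apoly) = 1 := by
    have h : (1 - X : Apoly) = C (-1) * (X - C 1) := by
      rw [map_neg, map_one]; ring
    rw [h, rootMultiplicity_mul (by
      rw [← h]; exact h1Xne), rootMultiplicity_X_sub_C_self]
    have : rootMultiplicity (1 : ℂ) (C (-1) : Apoly) = 0 :=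
      rootMultiplicity_eq_zero (by simp [IsRoot])
    rw [this]
  have hrm1u : rootMultiplicity (1 : ℂ) u = 1 := by
    rw [hu, rootMultiplicity_mul (mul_ne_zero hXne h1Xne), hrm1X, hrm11X]
  clear_value u
  -- restriction to y = 0
  set f₀ : Apoly := Ft.eval 0 with hf₀
  set p₀ : Apoly := Pt.eval 0 with hp₀
  set g : Apoly := G1t.eval 0 with hgdef
  have hy0 : f₀ * p₀ = u * g ^ 2 := by
    have := congrArg (Polynomial.eval (0 : Apoly)) hfactS
    simpa [hf₀, hp₀, hgdef, hu] using this
  clear_value f₀ p₀ g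
  have hgeval : g.eval 0 ≠ 0 := by
    rw [hgdef]
    have := hG1
    rw [ε_eval] at this
    simpa using this
  have hp₀eval : p₀.eval 0 ≠ 0 := by
    rw [hp₀]
    have := hP00
    rw [ε_eval] at this
    simpa using this
  have hf₀eval : f₀.eval 0 = 0 := by
    rw [hf₀]
    have := hF00
    rw [ε_eval] at this
    simpa using this
  have hgne : g ≠ 0 := fun h => hgeval (by rw [h]; simp)
  have hp₀ne : p₀ ≠ 0 := fun h => hp₀eval (by rw [h]; simp)
  have hrhs_ne : u * g ^ 2 ≠ 0 := mul_ne_zero hu0 (pow_ne_zero _ hgne)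
  have hf₀ne : f₀ ≠ 0 := by
    intro h
    rw [h, zero_mul] at hy0
    exact hrhs_ne hy0.symm
  have hFtne : Ft ≠ 0 := by
    intro h
    apply hf₀ne
    rw [hf₀, h, eval_zero]
  have hrmf₀ : rootMultiplicity (0 : ℂ) f₀ = 1 := by
    have h1 : rootMultiplicity (0 : ℂ) (f₀ * p₀) = rootMultiplicity 0 f₀ + rootMultiplicity 0 p₀ :=
      rootMultiplicity_mul (by rw [hy0]; exact hrhs_ne)
    have h2 : rootMultiplicity (0 : ℂ) (u * g ^ 2)
        = rootMultiplicity 0 u + 2 * rootMultiplicity 0 g := by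
      rw [rootMultiplicity_mul hrhs_ne, rm_pow' hgne _ _]
    have h3 : rootMultiplicity (0 : ℂ) g = 0 := rootMultiplicity_eq_zero hgeval
    have h4 : rootMultiplicity (0 : ℂ) p₀ = 0 := rootMultiplicity_eq_zero hp₀eval
    rw [hy0] at h1
    rw [h2, h3, h4, hrm0u] at h1
    omega
  -- find a prime factor of Ft vanishing at the origin
  obtain ⟨m, hm, hassoc⟩ := UniqueFactorizationMonoid.exists_prime_factors Ft hFtne
  obtain ⟨w, hw⟩ := hassoc
  have hε00prod : ε 0 0 m.prod = 0 := by
    by_contra hne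
    apply hne
    have : ε 0 0 m.prod * ε 0 0 (w : Spoly) = 0 := by
      rw [← map_mul, hw, hF00]
    have hwne : ε 0 0 (w : Spoly) ≠ 0 := by
      have : IsUnit (ε 0 0 (w : Spoly)) := w.isUnit.map (ε 0 0)
      exact this.ne_zero
    exact (mul_eq_zero.mp this).resolve_right hwne
  have : ∃ q ∈ m, ε 0 0 q = 0 := by
    rw [← m.map_id] at hε00prod
    by_contra hno
    push_neg at hno
    rw [show ε 0 0 (Multiset.map id m).prod = ((m.map id).map (ε 0 0)).prod from
      (map_multiset_prod (ε 0 0) _)] at hε00prod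
    rcases Multiset.prod_eq_zero_iff.mp hε00prod with hmem
    simp only [Multiset.mem_map] at hmem
    obtain ⟨q, hq, hq0⟩ := hmem
    exact hno q (by simpa using hq) hq0
  obtain ⟨q, hqm, hq00⟩ := this
  have hqprime : Prime q := hm q hqm
  have hqdvd : q ∣ Ft := by
    have h1 : q ∣ m.prod := Multiset.dvd_prod hqm
    exact h1.trans ⟨(w : Spoly), hw.symm⟩
  -- corner nonvanishing of q
  have hcorner : ∀ a b : ℂ, ε a b Ft ≠ 0 → ε a b q ≠ 0 := by
    intro a b hF h0
    obtain ⟨t, ht⟩ := hqdvd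
    apply hF
    rw [ht, map_mul, h0, zero_mul]
  have hq10 := hcorner 1 0 h10
  have hq01 := hcorner 0 1 h01
  have hq11 := hcorner 1 1 h11
  set a₀ : Apoly := q.eval 0 with ha₀
  set a₁ : Apoly := q.eval 1 with ha₁
  clear_value a₀ a₁
  have ha₀0 : a₀.eval 0 = 0 := by
    have := hq00; rw [ε_eval] at this; simpa [ha₀] using this
  have ha₀1 : a₀.eval 1 ≠ 0 := by
    have := hq10; rw [ε_eval] at this; simpa [ha₀] using this
  have ha₁0 : a₁.eval 0 ≠ 0 := by
    have := hq01; rw [ε_eval] at this; simpa [ha₁] using this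
  have ha₁1 : a₁.eval 1 ≠ 0 := by
    have := hq11; rw [ε_eval] at this; simpa [ha₁] using this
  have ha₀ne : a₀ ≠ 0 := fun h => ha₀1 (by rw [h]; simp)
  have ha₁ne : a₁ ≠ 0 := fun h => ha₁0 (by rw [h]; simp)
  -- q divides B
  have hqB : q ∣ C u * G1t ^ 2 + X * (1 - X) * G2t ^ 2 := hfactS ▸ (hqdvd.mul_right Pt)
  have hqndvd : ∀ t : Spoly, ε 0 0 t ≠ 0 → ¬ q ∣ t := by
    intro t h hdvd
    obtain ⟨s, hs⟩ := hdvd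
    apply h
    rw [hs, map_mul, hq00, zero_mul]
  have hε1X : ε 0 0 (1 - X : Spoly) ≠ 0 := by
    simp [ε]
  have hqX : ¬ q ∣ (X : Spoly) := by
    intro h
    have hassoc := (hqprime.irreducible).associated_of_dvd
      (Polynomial.prime_X (R := Apoly)).irreducible h
    have hXF : (X : Spoly) ∣ Ft := hassoc.symm.dvd.trans hqdvd
    obtain ⟨s, hs⟩ := hXF
    apply hf₀ne
    rw [hf₀, hs]; simp
  have hqG1 : ¬ q ∣ G1t := by
    intro h
    have h2 : q ∣ C u * G1t ^ 2 :=
      dvd_mul_of_dvd_right (dvd_pow h (by norm_num)) _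
    have h3 : q ∣ X * (1 - X) * G2t ^ 2 := (dvd_add_right h2).mp hqB
    rcases hqprime.2.2 _ _ h3 with h4 | h4
    · rcases hqprime.2.2 _ _ h4 with h5 | h5
      · exact hqX h5
      · exact (hqndvd (1 - X) hε1X) h5
    · exact hqndvd G2t hG2 (hqprime.dvd_of_dvd_pow h4)
  -- q has positive degree in y
  set n := q.natDegree with hn
  have hn1 : 1 ≤ n := by
    by_contra hcon
    have hn0 : q.natDegree = 0 := by omega
    have hqC : q = C (q.coeff 0) := eq_C_of_natDegree_eq_zero hn0
    have hc0 : (q.coeff 0).eval 0 = 0 := by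
      have : a₀ = q.coeff 0 := by rw [ha₀, hqC]; simp
      rw [← this]; exact ha₀0
    have hXdvd : (X : Apoly) ∣ q.coeff 0 := by
      rw [X_dvd_iff, coeff_zero_eq_eval_zero]; exact hc0
    have hCX : (C (X : Apoly) : Spoly) ∣ q := by
      rw [hqC]; exact map_dvd (C : Apoly →+* Spoly) hXdvd
    have hCXB : (C (X : Apoly) : Spoly) ∣ C u * G1t ^ 2 + X * (1 - X) * G2t ^ 2 :=
      hCX.trans hqB
    obtain ⟨s, hs⟩ := hCXB
    have hμ := congrArg (Polynomial.map (evalRingHom (0 : ℂ))) hs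
    rw [Polynomial.map_mul, map_C] at hμ
    simp only [coe_evalRingHom, eval_X] at hμ
    rw [map_zero] at hμ
    rw [zero_mul] at hμ
    rw [Polynomial.map_add, Polynomial.map_mul, Polynomial.map_mul, Polynomial.map_mul,
      Polynomial.map_pow, Polynomial.map_pow, map_C, Polynomial.map_sub, Polynomial.map_one,
      Polynomial.map_X] at hμ
    simp only [coe_evalRingHom] at hμ
    have hueval : Polynomial.eval (0 : ℂ) u = 0 := by simp [hu]
    rw [hueval, map_zero, zero_mul, zero_add] at hμ
    have hG2map : G2t.map (evalRingHom (0 : ℂ)) = 0 := by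
      have hX : (X : Polynomial ℂ) ≠ 0 := X_ne_zero
      have h1X : (1 - X : Polynomial ℂ) ≠ 0 := by
        intro h
        have := congrArg (Polynomial.eval (0 : ℂ)) h
        simp at this
      rcases mul_eq_zero.mp hμ with h | h
      · rcases mul_eq_zero.mp h with h2 | h2
        · exact absurd h2 hX
        · exact absurd h2 h1X
      · exact pow_eq_zero_iff (n := 2) (by norm_num) |>.mp h
    apply hG2
    have : ε 0 0 G2t = (G2t.map (evalRingHom (0 : ℂ))).eval 0 := by
      rw [eval_map]; rfl
    rw [this, hG2map]; simp
  -- primitivity and passage to the fraction field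
  have hqirr : Irreducible q := hqprime.irreducible
  have hqprim : q.IsPrimitive := by
    intro r hr
    obtain ⟨t, ht⟩ := hr
    rcases hqirr.isUnit_or_isUnit ht with h | h
    · exact isUnit_C.mp h
    · exfalso
      have hr0 : r ≠ 0 := by
        intro h0
        rw [h0, map_zero, zero_mul] at ht
        exact hqprime.ne_zero ht
      have ht0 : t ≠ 0 := h.ne_zero
      have hdeg := natDegree_mul (show (C r : Spoly) ≠ 0 by simpa using hr0) ht0
      rw [← ht, natDegree_C, natDegree_eq_zero_of_isUnit h] at hdeg
      omega
  have hφinj : Function.Injective (φK : Apoly →+* KK) := IsFractionRing.injective Apoly KK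
  set qK : Polynomial KK := q.map φK with hqKdef
  have hqKirr : Irreducible qK :=
    (hqprim.irreducible_iff_irreducible_map_fraction_map (K := KK)).mp hqirr
  have hqK0 : qK ≠ 0 := hqKirr.ne_zero
  have hdegK : qK.natDegree = n := by
    rw [hqKdef, natDegree_map_eq_of_injective hφinj]
  set ℓ : KK := qK.leadingCoeff with hℓdef
  have hℓ0 : ℓ ≠ 0 := leadingCoeff_ne_zero.mpr hqK0
  set qh : Polynomial KK := qK * C ℓ⁻¹ with hqhdef
  have hqhm : qh.Monic := monic_mul_leadingCoeff_inv hqK0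
  have hCinv : IsUnit (C ℓ⁻¹ : Polynomial KK) :=
    isUnit_C.mpr (isUnit_iff_ne_zero.mpr (inv_ne_zero hℓ0))
  have hassocq : Associated qK qh := ⟨hCinv.unit, by rw [IsUnit.unit_spec]⟩
  have hqhirr : Irreducible qh := hassocq.irreducible hqKirr
  haveI : Fact (Irreducible qh) := ⟨hqhirr⟩
  have hdegqh : qh.natDegree = n := by
    rw [hqhdef, natDegree_mul_C (inv_ne_zero hℓ0), hdegK]
  -- evaluations of qh at 0 and 1
  have hqK_eval0 : qK.eval 0 = φK a₀ := by
    rw [hqKdef, eval_map, eval₂_at_zero, coeff_zero_eq_eval_zero, ← ha₀]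
  have hqK_eval1 : qK.eval 1 = φK a₁ := by
    rw [hqKdef, eval_map, eval₂_at_one, ← ha₁]
  have hqh_eval0 : qh.eval 0 = φK a₀ * ℓ⁻¹ := by
    rw [hqhdef, eval_mul, eval_C, hqK_eval0]
  have hqh_eval1 : qh.eval 1 = φK a₁ * ℓ⁻¹ := by
    rw [hqhdef, eval_mul, eval_C, hqK_eval1]
  have hφa₀ : φK a₀ ≠ 0 := fun h => ha₀ne (hφinj (by rw [h, map_zero]))
  have hφa₁ : φK a₁ ≠ 0 := fun h => ha₁ne (hφinj (by rw [h, map_zero]))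
  have hqh0ne : qh.eval 0 ≠ 0 := by
    rw [hqh_eval0]; exact mul_ne_zero hφa₀ (inv_ne_zero hℓ0)
  have hqh1ne : qh.eval 1 ≠ 0 := by
    rw [hqh_eval1]; exact mul_ne_zero hφa₁ (inv_ne_zero hℓ0)
  -- the adjoin-root field
  set θ := AdjoinRoot.root qh with hθdef
  have haevalθ : aeval θ qh = 0 := by
    rw [AdjoinRoot.aeval_eq, AdjoinRoot.mk_self]
  have halgL : Function.Injective (algebraMap KK (AdjoinRoot qh)) :=
    RingHom.injective _
  have hθ0 : θ ≠ 0 := by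
    intro h
    have h2 : aeval (0 : AdjoinRoot qh) qh = 0 := by
      have h3 := haevalθ; rw [h] at h3; exact h3
    rw [aeval_def, eval₂_at_zero, coeff_zero_eq_eval_zero] at h2
    exact hqh0ne (by apply halgL; rw [h2, map_zero])
  have hθ1 : θ ≠ 1 := by
    intro h
    have h2 : aeval (1 : AdjoinRoot qh) qh = 0 := by
      have h3 := haevalθ; rw [h] at h3; exact h3
    rw [aeval_def, eval₂_at_one] at h2
    exact hqh1ne (by apply halgL; rw [h2, map_zero])
  -- map the divisibility into the fraction field polynomial ring
  have hqKB : qK ∣ (C u * G1t ^ 2 + X * (1 - X) * G2t ^ 2 : Spoly).map φK := by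
    have h2 := map_dvd (mapRingHom (φK : Apoly →+* KK)) hqB
    simp only [coe_mapRingHom] at h2
    exact h2
  have hqhB : qh ∣ (C u * G1t ^ 2 + X * (1 - X) * G2t ^ 2 : Spoly).map φK :=
    (hassocq.symm.dvd).trans hqKB
  set g1K : Polynomial KK := G1t.map φK with hg1Kdef
  set g2K : Polynomial KK := G2t.map φK with hg2Kdef
  have hBmap : (C u * G1t ^ 2 + X * (1 - X) * G2t ^ 2 : Spoly).map φK
      = C (φK u) * g1K ^ 2 + X * (1 - X) * g2K ^ 2 := by
    simp [Polynomial.map_add, Polynomial.map_mul, Polynomial.map_pow, map_C,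
      Polynomial.map_sub, Polynomial.map_one, Polynomial.map_X, hg1Kdef, hg2Kdef]
  set γ₁ := aeval θ g1K with hγ₁def
  set γ₂ := aeval θ g2K with hγ₂def
  clear_value g1K g2K
  have hrel : algebraMap KK (AdjoinRoot qh) (φK u) * γ₁ ^ 2 + θ * (1 - θ) * γ₂ ^ 2 = 0 := by
    obtain ⟨w, hwB⟩ := hqhB
    rw [hBmap] at hwB
    have h2 := congrArg (aeval θ) hwB
    simp only [map_add, map_mul, map_pow, aeval_C, aeval_X, map_sub, map_one] at h2
    rw [haevalθ, zero_mul] at h2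
    rw [hγ₁def, hγ₂def]
    exact h2
  -- γ₁ is nonzero
  have hγ₁ne : γ₁ ≠ 0 := by
    intro h
    have hmin : minpoly KK θ = qh := by
      rw [hθdef, AdjoinRoot.minpoly_root hqhm.ne_zero, hqhm.leadingCoeff, inv_one, map_one,
        mul_one]
    have hdvd1 : qh ∣ g1K := by
      rw [← hmin]
      exact minpoly.dvd KK θ h
    have hdvd2 : qK ∣ g1K := hassocq.dvd.trans hdvd1
    have hG1ne : G1t ≠ 0 := by
      intro h0
      apply hG1
      rw [h0, map_zero]
    have hqKprime : Prime qK := hqKirr.prime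
    have hcontne : G1t.content ≠ 0 := fun h0 => hG1ne (content_eq_zero_iff.mp h0)
    have hsplit : g1K = C (φK G1t.content) * (G1t.primPart.map φK) := by
      rw [hg1Kdef]
      conv_lhs => rw [eq_C_content_mul_primPart G1t]
      rw [Polynomial.map_mul, map_C]
    rcases hqKprime.2.2 _ _ (hsplit ▸ hdvd2) with h' | h'
    · obtain ⟨t, ht'⟩ := h'
      have hφc : (φK G1t.content) ≠ 0 := fun h0 => hcontne (hφinj (by rw [h0, map_zero]))
      have hCne : (C (φK G1t.content) : Polynomial KK) ≠ 0 := by simpa using hφc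
      have ht0 : t ≠ 0 := by
        intro h0
        rw [h0, mul_zero] at ht'
        exact hCne ht'
      have hdeg := natDegree_mul hqK0 ht0
      rw [← ht', natDegree_C] at hdeg
      omega
    · have := hqprim.dvd_of_fraction_map_dvd_fraction_map h'
      exact hqG1 (this.trans (primPart_dvd G1t))
  -- the square relation in the extension field
  set v : AdjoinRoot qh := θ * (1 - θ) with hvdef
  have hvne : v ≠ 0 := mul_ne_zero hθ0 (sub_ne_zero.mpr (Ne.symm hθ1))
  set αu : AdjoinRoot qh := algebraMap KK (AdjoinRoot qh) (φK u) with hαudef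
  set s : AdjoinRoot qh := v * γ₂ * γ₁⁻¹ with hsdef
  have hs2 : s ^ 2 = -(αu * v) := by
    have hγsq : γ₁ ^ 2 ≠ 0 := pow_ne_zero _ hγ₁ne
    have hrel' := hrel
    rw [hvdef] at hrel'
    rw [hsdef, hvdef]
    field_simp
    linear_combination hrel' 
  -- norms
  haveI : FiniteDimensional KK (AdjoinRoot qh) := (AdjoinRoot.powerBasis hqhm.ne_zero).finite
  have hfr : Module.finrank KK (AdjoinRoot qh) = n := by
    rw [(AdjoinRoot.powerBasis hqhm.ne_zero).finrank, AdjoinRoot.powerBasis_dim, hdegqh]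
  have hNθ : Algebra.norm KK θ = (-1 : KK) ^ n * qh.eval 0 := by
    have h2 := norm_root_eq qh hqhm
    rw [hdegqh] at h2
    rw [hθdef]
    exact h2
  have hN1θ : Algebra.norm KK (1 - θ) = qh.eval 1 := by
    have h2 := norm_one_sub_root_eq qh hqhm
    rw [hθdef]
    exact h2
  have hNαu : Algebra.norm KK αu = (φK u) ^ n := by
    rw [hαudef, Algebra.norm_algebraMap, hfr]
  have hNneg : Algebra.norm KK (-1 : AdjoinRoot qh) = (-1 : KK) ^ n := by
    have h2 : (-1 : AdjoinRoot qh) = algebraMap KK (AdjoinRoot qh) (-1) := by simp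
    rw [h2, Algebra.norm_algebraMap, hfr]
  have hNs2 : (Algebra.norm KK s) ^ 2 * ℓ ^ 2 = φK (u ^ n * (a₀ * a₁)) := by
    have h2 : Algebra.norm KK (s ^ 2) = (Algebra.norm KK s) ^ 2 := map_pow _ _ 2
    have h3 : s ^ 2 = (-1) * αu * (θ * (1 - θ)) := by rw [hs2, hvdef]; ring
    have h5 : (Algebra.norm KK s) ^ 2
        = ((-1 : KK) ^ n) * ((φK u) ^ n) * (((-1 : KK) ^ n * qh.eval 0) * qh.eval 1) := by
      rw [← h2, h3, map_mul, map_mul, map_mul, hNneg, hNαu, hNθ, hN1θ]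
    rw [hqh_eval0, hqh_eval1] at h5
    rw [h5, map_mul, map_pow, map_mul]
    have hone : ((-1 : KK) ^ n) * ((-1 : KK) ^ n) = 1 := by
      rw [← pow_add, ← two_mul, pow_mul]
      norm_num
    have hℓinv : ℓ⁻¹ * ℓ = 1 := inv_mul_cancel₀ hℓ0
    calc (-1:KK)^n * φK u ^ n * ((-1:KK)^n * (φK a₀ * ℓ⁻¹) * (φK a₁ * ℓ⁻¹)) * ℓ^2
        = ((-1:KK)^n * (-1:KK)^n) * (φK u ^ n * (φK a₀ * φK a₁)) * ((ℓ⁻¹ * ℓ) * (ℓ⁻¹ * ℓ)) := by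
          ring
      _ = φK u ^ n * (φK a₀ * φK a₁) := by rw [hone, hℓinv]; ring
  -- descend to ℂ[x]
  set T : Apoly := u ^ n * (a₀ * a₁) with hTdef
  have hTne : T ≠ 0 := mul_ne_zero (pow_ne_zero _ hu0) (mul_ne_zero ha₀ne ha₁ne)
  obtain ⟨⟨num, den⟩, hnd⟩ := IsLocalization.surj (nonZeroDivisors Apoly)
    (Algebra.norm KK s * ℓ)
  have hdenne : (den : Apoly) ≠ 0 := nonZeroDivisors.ne_zero den.2
  have hTden : T * (den : Apoly) ^ 2 = num ^ 2 := by
    apply hφinj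
    have h2 := congrArg (· ^ 2) hnd
    simp only [mul_pow] at h2
    rw [map_mul, map_pow]
    calc φK T * φK (den : Apoly) ^ 2
        = ((Algebra.norm KK s) ^ 2 * ℓ ^ 2) * (algebraMap Apoly KK (den : Apoly)) ^ 2 := by
          rw [hNs2]
      _ = (algebraMap Apoly KK num) ^ 2 := by rw [← h2]
      _ = φK (num ^ 2) := by rw [map_pow]
  have hnumne : num ≠ 0 := by
    intro h0
    rw [h0] at hTden
    have := mul_ne_zero hTne (pow_ne_zero 2 hdenne)
    rw [hTden] at this
    simp at this
  have hpar : ∀ c : ℂ, Even (rootMultiplicity c T) := by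
    intro c
    have h1 : rootMultiplicity c (T * (den : Apoly) ^ 2)
        = rootMultiplicity c T + 2 * rootMultiplicity c (den : Apoly) := by
      rw [rootMultiplicity_mul (mul_ne_zero hTne (pow_ne_zero _ hdenne)), rm_pow' hdenne]
    have h2 : rootMultiplicity c (num ^ 2) = 2 * rootMultiplicity c num :=
      rm_pow' hnumne c 2
    rw [hTden, h2] at h1
    exact ⟨rootMultiplicity c num - rootMultiplicity c (den : Apoly), by omega⟩
  -- multiplicity computations
  have hrm0a₀ : rootMultiplicity (0 : ℂ) a₀ = 1 := by
    obtain ⟨t, ht⟩ := hqdvd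
    have hf0fac : f₀ = a₀ * t.eval 0 := by
      rw [hf₀, ht, eval_mul, ← ha₀]
    have h1 : rootMultiplicity (0 : ℂ) f₀
        = rootMultiplicity 0 a₀ + rootMultiplicity 0 (t.eval 0) := by
      rw [hf0fac, rootMultiplicity_mul (by rw [← hf0fac]; exact hf₀ne)]
    have h2 : 1 ≤ rootMultiplicity (0 : ℂ) a₀ := (rootMultiplicity_pos ha₀ne).mpr ha₀0
    omega
  have hrm0T : rootMultiplicity (0 : ℂ) T = n + 1 := by
    rw [hTdef, rootMultiplicity_mul (by rw [← hTdef]; exact hTne), rm_pow' hu0,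
      rootMultiplicity_mul (mul_ne_zero ha₀ne ha₁ne), hrm0u, hrm0a₀,
      rootMultiplicity_eq_zero ha₁0]
    ring
  have hrm1T : rootMultiplicity (1 : ℂ) T = n := by
    rw [hTdef, rootMultiplicity_mul (by rw [← hTdef]; exact hTne), rm_pow' hu0,
      rootMultiplicity_mul (mul_ne_zero ha₀ne ha₁ne), hrm1u,
      rootMultiplicity_eq_zero ha₀1, rootMultiplicity_eq_zero ha₁1]
    ring
  obtain ⟨k1, hk1⟩ := hpar 0
  obtain ⟨k2, hk2⟩ := hpar 1
  rw [hrm0T] at hk1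
  rw [hrm1T] at hk2
  omega

end StmtAux

open MvPolynomial

/-- Lemma 4: any factor `F` of `B = x(1−x)G₁² + y(1−y)G₂²` vanishing at the
origin (with cofactor not vanishing there) must have an additional zero on
`Z₀ = {0,1} × {0,1}`. -/
theorem stmt3 (G₁ G₂ F P : MvPolynomial (Fin 2) ℂ)
    (hG₁ : eval ![0, 0] G₁ ≠ 0) (hG₂ : eval ![0, 0] G₂ ≠ 0)
    (hfact : F * P = X 0 * (1 - X 0) * G₁ ^ 2 + X 1 * (1 - X 1) * G₂ ^ 2)
    (hF0 : eval ![0, 0] F = 0) (hP0 : eval ![0, 0] P ≠ 0) :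
    ∃ a : ℂ × ℂ, a.1 ∈ ({0, 1} : Set ℂ) ∧ a.2 ∈ ({0, 1} : Set ℂ) ∧
      a ≠ (0, 0) ∧ eval ![a.1, a.2] F = 0 := by
  by_contra hcon
  push_neg at hcon
  have h10 : eval ![1, 0] F ≠ 0 := by
    have := hcon (1, 0) (by norm_num) (by norm_num) (by simp)
    simpa using this
  have h01 : eval ![0, 1] F ≠ 0 := by
    have := hcon (0, 1) (by norm_num) (by norm_num) (by simp)
    simpa using this
  have h11 : eval ![1, 1] F ≠ 0 := by
    have := hcon (1, 1) (by norm_num) (by norm_num) (by simp)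
    simpa using this
  refine main_aux (Φ F) (Φ P) (Φ G₁) (Φ G₂) ?_ ?_ ?_ ?_ ?_ ?_ ?_ ?_
  · have hΦ := congrArg Φ hfact
    simp only [map_mul, map_add, map_sub, map_one, map_pow] at hΦ
    have hX0 : Φ (X 0) = Polynomial.C Polynomial.X := by simp [Φ]
    have hX1 : Φ (X 1) = Polynomial.X := by simp [Φ]
    rw [hX0, hX1] at hΦ
    rw [hΦ, map_mul, map_sub, map_one]
  · rw [← eval_eq_ε]; exact hG₁
  · rw [← eval_eq_ε]; exact hG₂
  · rw [← eval_eq_ε]; exact hF0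
  · rw [← eval_eq_ε]; exact hP0
  · rw [← eval_eq_ε]; exact h10
  · rw [← eval_eq_ε]; exact h01
  · rw [← eval_eq_ε]; exact h11
end
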